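/- arXiv:1503.01404 — 6 statements merged into one kernel-verified Lean document; each statement's English description precedes it below -/
import Mathlib

section
/- Let K = F_q be a finite field and let X ⊆ P^{s-1} be parameterized by monomials y^{v_1},...,y^{v_s} in K[y_1,...,y_n] such that supp(y^{v_i}) ⊄ supp(y^{v_j}) for all i ≠ j. If f = t_j^{a_j} - t^c is a nonzero binomial with a_j a positive integer, then f is not in the vanishing ideal I(X). -/
open MvPolynomial

/-- Evaluation of the monomials `y^{v_1},…,y^{v_s}` at a point `x ∈ K^n`. -/
noncomputable def monEval {K : Type} [Field K] {n s : ℕ} (v : Fin s → Fin n → ℕ)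
    (x : Fin n → K) : Fin s → K := fun i => ∏ j, x j ^ v i j

/-- The subset of `ℙ^{s-1}` parameterized by the monomials `y^{v_1},…,y^{v_s}`. -/
noncomputable def paramSet {K : Type} [Field K] {n s : ℕ} (v : Fin s → Fin n → ℕ) :
    Set (Projectivization K (Fin s → K)) :=
  { p | ∃ (x : Fin n → K) (h : monEval v x ≠ 0), p = Projectivization.mk K (monEval v x) h }

/-- The vanishing ideal of a set of projective points: the ideal generated by the
homogeneous polynomials vanishing at all points of the set. -/
noncomputable def vanishIdeal {K : Type} [Field K] {s : ℕ}
    (X : Set (Projectivization K (Fin s → K))) : Ideal (MvPolynomial (Fin s) K) :=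
  Ideal.span { f | (∃ d, f.IsHomogeneous d) ∧ ∀ p ∈ X, eval p.rep f = 0 }

/-- `supp(y^{v_i}) ⊄ supp(y^{v_j})` for all `i ≠ j`. -/
def clutterType {n s : ℕ} (v : Fin s → Fin n → ℕ) : Prop :=
  ∀ i j : Fin s, i ≠ j → ¬ ({k | v i k ≠ 0} ⊆ {k | v j k ≠ 0})

/-!
Put `x_k = 1` on the support of `y^{v_j}` and `x_k = 0` elsewhere. Because no other support
is contained in that of `y^{v_j}`, this `x` parameterizes the coordinate point `e_j ∈ X`.
Since `I(X)` is homogeneous, it would contain the degree-`a` component of `f`, namely `t_j^a`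
or `t_j^a - t^c`. At `e_j` the first evaluates to `1`, and `t^c` vanishes unless `t^c` is a
power of `t_j`, which (being of degree `a`) would force `f = 0`.
-/

theorem MvPolynomial.IsHomogeneous.eval_smul {σ R : Type*} [CommSemiring R]
    {φ : MvPolynomial σ R} {d : ℕ} (hφ : φ.IsHomogeneous d) (l : R) (y : σ → R) :
    eval (l • y) φ = l ^ d * eval y φ := by
  rw [eval_eq, eval_eq, Finset.mul_sum]
  refine Finset.sum_congr rfl fun e he => ?_
  have hdeg : ∑ i ∈ e.support, e i = d := by
    rw [← hφ (mem_support_iff.mp he)]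
    simp [Finsupp.weight_apply, Finsupp.sum]
  simp only [Pi.smul_apply, smul_eq_mul, mul_pow, Finset.prod_mul_distrib,
    Finset.prod_pow_eq_pow_sum, hdeg]
  ring

theorem eval_eq_zero_of_mem_vanishIdeal {K : Type} [Field K] {s : ℕ}
    {X : Set (Projectivization K (Fin s → K))} {f : MvPolynomial (Fin s) K}
    (hf : f ∈ vanishIdeal X) {y : Fin s → K} (hy : y ≠ 0)
    (hyX : Projectivization.mk K y hy ∈ X) :
    eval y f = 0 := by
  suffices vanishIdeal X ≤ RingHom.ker (eval y) from this hf
  rw [vanishIdeal, Ideal.span_le]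
  rintro g ⟨⟨d, hg⟩, hgX⟩
  obtain ⟨u, hu⟩ := Projectivization.exists_smul_eq_mk_rep K y hy
  have := hgX _ hyX
  rw [← hu, Units.smul_def, hg.eval_smul] at this
  exact (mul_eq_zero.mp this).resolve_left (pow_ne_zero _ u.ne_zero)

attribute [local instance] MvPolynomial.gradedAlgebra

theorem vanishIdeal_isHomogeneous {K : Type} [Field K] {s : ℕ}
    (X : Set (Projectivization K (Fin s → K))) :
    (vanishIdeal X).IsHomogeneous (homogeneousSubmodule (Fin s) K) :=
  Ideal.homogeneous_span _ _ fun _ hf => hf.1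

theorem clutterType.monEval_indicator_eq_single {K : Type} [Field K] {n s : ℕ}
    {v : Fin s → Fin n → ℕ} (hcl : clutterType v) (j : Fin s) :
    monEval v (fun k => if v j k = 0 then (0 : K) else 1) = Pi.single j 1 := by
  funext i
  rcases eq_or_ne i j with rfl | hij
  · rw [Pi.single_eq_same]
    refine Finset.prod_eq_one fun k _ => ?_
    by_cases hk : v i k = 0 <;> simp [hk]
  · obtain ⟨k, hik, hjk⟩ := Set.not_subset.mp (hcl i j hij)
    simp only [Set.mem_ofPred_eq, not_not] at hik hjk
    rw [Pi.single_eq_of_ne hij]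
    exact Finset.prod_eq_zero (Finset.mem_univ k) (by simp [hjk, hik])

theorem MvPolynomial.eq_single_of_eval_single_monomial_ne_zero {σ R : Type*} [CommSemiring R]
    [DecidableEq σ] {j : σ} {c : σ →₀ ℕ} {r : R}
    (h : eval (Pi.single j 1) (monomial c r) ≠ 0) : c = Finsupp.single j (c j) := by
  ext i
  rcases eq_or_ne i j with rfl | hij
  · simp
  rw [Finsupp.single_eq_of_ne hij]
  by_contra hci
  refine h ?_
  rw [eval_monomial, Finsupp.prod, Finset.prod_eq_zero (Finsupp.mem_support_iff.mpr hci)]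
  · exact mul_zero _
  · rw [Pi.single_eq_of_ne hij, zero_pow hci]

theorem stmt1_general {K : Type} [Field K] {n s : ℕ} (v : Fin s → Fin n → ℕ)
    (hcl : clutterType v) (j : Fin s) (a : ℕ) (c : Fin s →₀ ℕ)
    (hf : (monomial (Finsupp.single j a) (1 : K) - monomial c 1 : MvPolynomial (Fin s) K) ≠ 0) :
    (monomial (Finsupp.single j a) (1 : K) - monomial c 1 : MvPolynomial (Fin s) K) ∉
      vanishIdeal (paramSet v) := by
  intro hmem
  set x : Fin n → K := fun k => if v j k = 0 then 0 else 1
  have hx : monEval v x = Pi.single j 1 := hcl.monEval_indicator_eq_single j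
  have hx0 : monEval v x ≠ 0 := by simp [hx]
  have hzero := eval_eq_zero_of_mem_vanishIdeal
    (homogeneousComponent_mem_of_mem (vanishIdeal_isHomogeneous _) hmem a) hx0 ⟨x, hx0, rfl⟩
  rw [map_sub, homogeneousComponent_of_mem (isHomogeneous_monomial _ (Finsupp.degree_single j a)),
    homogeneousComponent_of_mem (isHomogeneous_monomial _ rfl), if_pos rfl, hx] at hzero
  have hj : eval (Pi.single j 1 : Fin s → K) (monomial (Finsupp.single j a) 1) = 1 := by
    rw [eval_monomial, Finsupp.prod_single_index] <;> simp
  rw [map_sub, hj] at hzero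
  split_ifs at hzero with hdeg
  · have hc : c = Finsupp.single j (c j) := eq_single_of_eval_single_monomial_ne_zero
      (by rw [← sub_eq_zero.mp hzero]; exact one_ne_zero)
    rw [hc, Finsupp.degree_single] at hdeg
    rw [hc, ← hdeg, sub_self] at hf
    exact hf rfl
  · rw [map_zero, sub_zero] at hzero
    exact one_ne_zero hzero

/-- If the supports of the parameterizing monomials are pairwise incomparable, then a
nonzero binomial of the form `t_j^{a_j} - t^c` (with `a_j > 0`) does not belong
to the vanishing ideal `I(X)`. -/
theorem stmt1 {K : Type} [Field K] [Fintype K] {n s : ℕ} (v : Fin s → Fin n → ℕ)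
    (hcl : clutterType v) (j : Fin s) (a : ℕ) (ha : 0 < a) (c : Fin s →₀ ℕ)
    (hf : (monomial (Finsupp.single j a) (1 : K) - monomial c 1 : MvPolynomial (Fin s) K) ≠ 0) :
    (monomial (Finsupp.single j a) (1 : K) - monomial c 1 : MvPolynomial (Fin s) K) ∉
      vanishIdeal (paramSet v) :=
  stmt1_general v hcl j a c hf
end

section
/- Let K be a field and let I ⊆ K[t_1,t_2,t_3,t_4] be the ideal generated by g_1 = t_1t_2 - t_3t_4, g_2 = t_1t_3 - t_2t_4, g_3 = t_2t_3 - t_1t_4. Then G = {t_2t_3 - t_1t_4, t_1t_3 - t_2t_4, t_1t_2 - t_3t_4, t_2²t_4 - t_3²t_4, t_1²t_4 - t_3²t_4, t_3³t_4 - t_3t_4³} is a Gröbner basis of I with respect to the graded reverse lexicographic order. -/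
open MvPolynomial

/-- Total degree of an exponent vector. -/
def totDeg {s : ℕ} (a : Fin s →₀ ℕ) : ℕ := a.sum fun _ e => e

/-- The graded reverse lexicographic order on exponent vectors, with
`t_1 > t_2 > ⋯ > t_s` (variables indexed by `Fin s` in that order):
`a ≺ b` iff `deg a < deg b`, or the degrees agree and the last coordinate
in which `a` and `b` differ is larger in `a`. -/
def grevlexLT {s : ℕ} (a b : Fin s →₀ ℕ) : Prop :=
  totDeg a < totDeg b ∨
    (totDeg a = totDeg b ∧ ∃ i : Fin s, b i < a i ∧ ∀ j : Fin s, i < j → a j = b j)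

/-- `a` is the leading exponent (exponent of the leading term) of `f` w.r.t. GRevLex. -/
def IsLeadExp {K : Type} [Field K] {s : ℕ} (f : MvPolynomial (Fin s) K)
    (a : Fin s →₀ ℕ) : Prop :=
  a ∈ f.support ∧ ∀ b ∈ f.support, b ≠ a → grevlexLT b a

/-- `G` is a Gröbner basis of `I` w.r.t. GRevLex: `G` generates `I` and the leading
term of every nonzero element of `I` is divisible by the leading term of some
element of `G`. -/
def IsGroebnerBasis {K : Type} [Field K] {s : ℕ}
    (G : Set (MvPolynomial (Fin s) K)) (I : Ideal (MvPolynomial (Fin s) K)) : Prop :=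
  G ⊆ I ∧ Ideal.span G = I ∧
  ∀ f ∈ I, f ≠ 0 → ∀ a, IsLeadExp f a →
    ∃ g ∈ G, g ≠ 0 ∧ ∃ b, IsLeadExp g b ∧ b ≤ a

/-!
Every monomial is congruent modulo the ideal to a standard one, i.e. one divisible by none of the
leading monomials `t₂t₃, t₁t₃, t₁t₂, t₂²t₄, t₁²t₄, t₃³t₄`, and the choice can be made explicit.
The generators are homogeneous for the `ℤ/2 × ℤ/2`-grading `t₁ ↦ (1,0), t₂ ↦ (0,1), t₃ ↦ (1,1),
t₄ ↦ 0`, and a non-standard monomial of degree `n` is sent to the standard monomial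
`t₃²t₄ⁿ⁻², t₁t₄ⁿ⁻¹, t₂t₄ⁿ⁻¹` or `t₃t₄ⁿ⁻¹` of the same degree and grading class. This map on
exponents is invariant under the three binomial moves, fixes standard exponents and lowers the
others, so its linear extension kills the ideal without changing the coefficient of a standard
leading exponent. Hence the leading exponent of a nonzero element of the ideal is non-standard,
i.e. divisible by one of the six leading monomials.
-/

section MapExponents

variable {σ R : Type*} [CommSemiring R]

noncomputable def mapExponents (N : (σ →₀ ℕ) → σ →₀ ℕ) :
    MvPolynomial σ R →ₗ[R] MvPolynomial σ R :=
  (basisMonomials σ R).constr R fun m => monomial (N m) 1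

variable (N : (σ →₀ ℕ) → σ →₀ ℕ)

theorem mapExponents_monomial (m : σ →₀ ℕ) (c : R) :
    mapExponents N (monomial m c) = monomial (N m) c := by
  have h := (basisMonomials σ R).constr_basis R (fun m => monomial (N m) (1 : R)) m
  rw [coe_basisMonomials] at h
  rw [← mul_one c, ← smul_eq_mul, ← smul_monomial, ← smul_monomial, map_smul, mapExponents, h]

theorem coeff_mapExponents_of_forall_ne {f : MvPolynomial σ R} {a : σ →₀ ℕ} (ha : N a = a)
    (hf : ∀ m ∈ f.support, m ≠ a → N m ≠ a) : coeff a (mapExponents N f) = coeff a f := by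
  classical
  conv_lhs => rw [f.as_sum]
  rw [map_sum, coeff_sum, Finset.sum_eq_single a]
  · rw [mapExponents_monomial, ha, coeff_monomial, if_pos rfl]
  · intro m hm hma
    rw [mapExponents_monomial, coeff_monomial, if_neg (hf m hm hma)]
  · intro ha'
    rw [mapExponents_monomial, ha, coeff_monomial, if_pos rfl,
      MvPolynomial.notMem_support_iff.mp ha']

theorem mapExponents_mul_monomial_eq {u v : σ →₀ ℕ} (huv : ∀ m, N (m + u) = N (m + v))
    (p : MvPolynomial σ R) (c : R) :
    mapExponents N (p * monomial u c) = mapExponents N (p * monomial v c) := by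
  induction p using MvPolynomial.induction_on' with
  | monomial m d => simp only [monomial_mul, mapExponents_monomial, huv]
  | add p q hp hq => simp only [add_mul, map_add, hp, hq]

theorem mapExponents_eq_zero_of_mem_span {G : Set (MvPolynomial σ R)}
    (hG : ∀ g ∈ G, ∀ p, mapExponents N (p * g) = 0) {f : MvPolynomial σ R}
    (hf : f ∈ Ideal.span G) : mapExponents N f = 0 := by
  suffices ∀ p, mapExponents N (p * f) = 0 by simpa using this 1
  induction hf using Submodule.span_induction with
  | mem g hg => exact hG g hg
  | zero => simp
  | add f g _ _ hf hg => simp [mul_add, hf, hg]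
  | smul q f _ hf => intro p; rw [smul_eq_mul, ← mul_assoc, hf]

end MapExponents

theorem mapExponents_mul_binomial {σ R : Type*} [CommRing R] {N : (σ →₀ ℕ) → σ →₀ ℕ}
    {u v : σ →₀ ℕ} (huv : ∀ m, N (m + u) = N (m + v)) (p : MvPolynomial σ R) :
    mapExponents N (p * (monomial u 1 - monomial v 1)) = 0 := by
  rw [mul_sub, map_sub, mapExponents_mul_monomial_eq N huv, sub_self]

section Grevlex

variable {s : ℕ}

theorem totDeg_eq_sum (a : Fin s →₀ ℕ) : totDeg a = ∑ i, a i :=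
  Finsupp.sum_fintype _ _ fun _ => rfl

theorem grevlexLT_irrefl (a : Fin s →₀ ℕ) : ¬grevlexLT a a := by
  rintro (h | ⟨-, i, hi, -⟩) <;> exact lt_irrefl _ ‹_›

theorem grevlexLT_trans {a b c : Fin s →₀ ℕ} (hab : grevlexLT a b) (hbc : grevlexLT b c) :
    grevlexLT a c := by
  rcases hab with hab | ⟨eab, i, hi, ti⟩
  · rcases hbc with hbc | ⟨ebc, -⟩
    · exact Or.inl (hab.trans hbc)
    · exact Or.inl (ebc ▸ hab)
  rcases hbc with hbc | ⟨ebc, j, hj, tj⟩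
  · exact Or.inl (eab ▸ hbc)
  refine Or.inr ⟨eab.trans ebc, ?_⟩
  rcases lt_trichotomy i j with hij | rfl | hij
  · exact ⟨j, ti j hij ▸ hj, fun k hk => (ti k (hij.trans hk)).trans (tj k hk)⟩
  · exact ⟨i, hj.trans hi, fun k hk => (ti k hk).trans (tj k hk)⟩
  · exact ⟨i, tj i hij ▸ hi, fun k hk => (ti k hk).trans (tj k (hij.trans hk))⟩

variable {K : Type} [Field K]

theorem isLeadExp_monomial_sub_monomial {u v : Fin s →₀ ℕ} (hvu : grevlexLT v u) :
    IsLeadExp (monomial u (1 : K) - monomial v 1) u := by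
  have hne : v ≠ u := fun h => grevlexLT_irrefl u (h ▸ hvu)
  refine ⟨?_, fun b hb hbu => ?_⟩
  · simp [coeff_monomial, hne]
  · rw [mem_support_iff, coeff_sub, coeff_monomial, coeff_monomial, if_neg (Ne.symm hbu)] at hb
    obtain rfl : v = b := by by_contra h; simp [h] at hb
    exact hvu

theorem exists_isLeadExp_le_of_binomial_mem {G : Set (MvPolynomial (Fin s) K)} {u v a : Fin s →₀ ℕ}
    (hG : monomial u 1 - monomial v 1 ∈ G) (hvu : grevlexLT v u) (hua : u ≤ a) :
    ∃ g ∈ G, g ≠ 0 ∧ ∃ b, IsLeadExp g b ∧ b ≤ a :=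
  have hlead := isLeadExp_monomial_sub_monomial (K := K) hvu
  ⟨_, hG, fun h => by simp [h, IsLeadExp] at hlead, u, hlead, hua⟩

theorem not_isLeadExp_of_mapExponents_eq_zero {N : (Fin s →₀ ℕ) → Fin s →₀ ℕ}
    (hN : ∀ m, N m = m ∨ grevlexLT (N m) m) {f : MvPolynomial (Fin s) K}
    (hf : mapExponents N f = 0) {a : Fin s →₀ ℕ} (ha : IsLeadExp f a) (haN : N a = a) : False := by
  have hcoeff := coeff_mapExponents_of_forall_ne N haN fun m hm hma hNm => by
    rcases hN m with h | h
    · exact hma (h ▸ hNm)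
    · exact grevlexLT_irrefl a (grevlexLT_trans (hNm ▸ h) (ha.2 m hm hma))
  rw [hf, coeff_zero] at hcoeff
  exact mem_support_iff.mp ha.1 hcoeff.symm

end Grevlex

open Finsupp

theorem X_pow_mul_X_pow_eq_monomial {σ R : Type*} [CommSemiring R] (i j : σ) (k l : ℕ) :
    (X i ^ k * X j ^ l : MvPolynomial σ R) = monomial (single i k + single j l) 1 := by
  rw [X_pow_eq_monomial, X_pow_eq_monomial, monomial_mul, one_mul]

theorem X_mul_X_eq_monomial {σ R : Type*} [CommSemiring R] (i j : σ) :
    (X i * X j : MvPolynomial σ R) = monomial (single i 1 + single j 1) 1 := by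
  rw [← X_pow_mul_X_pow_eq_monomial, pow_one, pow_one]

-- Variable `i : Fin 4` is `t_{i+1}`.
def IsStandard (m : Fin 4 →₀ ℕ) : Prop :=
  (m 1 = 0 ∨ m 2 = 0) ∧ (m 0 = 0 ∨ m 2 = 0) ∧ (m 0 = 0 ∨ m 1 = 0) ∧
    (m 1 < 2 ∨ m 3 = 0) ∧ (m 0 < 2 ∨ m 3 = 0) ∧ (m 2 < 3 ∨ m 3 = 0)

noncomputable def classRep (m : Fin 4 →₀ ℕ) : Fin 4 →₀ ℕ :=
  let n := m 0 + m 1 + m 2 + m 3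
  if (m 0 + m 2) % 2 = 0 ∧ (m 1 + m 2) % 2 = 0 then single 2 2 + single 3 (n - 2)
  else if (m 1 + m 2) % 2 = 0 then single 0 1 + single 3 (n - 1)
  else if (m 0 + m 2) % 2 = 0 then single 1 1 + single 3 (n - 1)
  else single 2 1 + single 3 (n - 1)

open Classical in
noncomputable def normalForm (m : Fin 4 →₀ ℕ) : Fin 4 →₀ ℕ :=
  if IsStandard m then m else classRep m

theorem classRep_congr {m m' : Fin 4 →₀ ℕ}
    (hdeg : m 0 + m 1 + m 2 + m 3 = m' 0 + m' 1 + m' 2 + m' 3)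
    (h02 : (m 0 + m 2) % 2 = (m' 0 + m' 2) % 2) (h12 : (m 1 + m 2) % 2 = (m' 1 + m' 2) % 2) :
    classRep m = classRep m' := by
  simp only [classRep, hdeg, h02, h12]

theorem classRep_eq_self {m : Fin 4 →₀ ℕ} (hm : IsStandard m) (h3 : 0 < m 3)
    (h012 : 0 < m 0 + m 1 + m 2) : classRep m = m := by
  unfold IsStandard at hm
  ext k
  fin_cases k <;> simp only [classRep] <;> split_ifs <;> simp <;> omega

theorem normalForm_eq_classRep {m : Fin 4 →₀ ℕ} (h3 : 0 < m 3) (h012 : 0 < m 0 + m 1 + m 2) :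
    normalForm m = classRep m := by
  unfold normalForm
  split_ifs with hm
  · exact (classRep_eq_self hm h3 h012).symm
  · rfl

theorem normalForm_of_not_isStandard {m : Fin 4 →₀ ℕ} (hm : ¬IsStandard m) :
    normalForm m = classRep m := if_neg hm

theorem normalForm_of_isStandard {m : Fin 4 →₀ ℕ} (hm : IsStandard m) :
    normalForm m = m := if_pos hm

theorem normalForm_add_eq_normalForm_add (m : Fin 4 →₀ ℕ) :
    normalForm (m + (single 0 1 + single 1 1)) = normalForm (m + (single 2 1 + single 3 1)) ∧
    normalForm (m + (single 0 1 + single 2 1)) = normalForm (m + (single 1 1 + single 3 1)) ∧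
    normalForm (m + (single 1 1 + single 2 1)) = normalForm (m + (single 0 1 + single 3 1)) := by
  refine ⟨?_, ?_, ?_⟩ <;>
  · rw [normalForm_of_not_isStandard (by simp [IsStandard]),
      normalForm_eq_classRep (by simp) (by simp)]
    apply classRep_congr <;> simp <;> omega

theorem grevlexLT_fin_four_iff {a b : Fin 4 →₀ ℕ} :
    grevlexLT a b ↔ a 0 + a 1 + a 2 + a 3 < b 0 + b 1 + b 2 + b 3 ∨
      a 0 + a 1 + a 2 + a 3 = b 0 + b 1 + b 2 + b 3 ∧
        (b 3 < a 3 ∨ a 3 = b 3 ∧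
          (b 2 < a 2 ∨ a 2 = b 2 ∧ (b 1 < a 1 ∨ a 1 = b 1 ∧ b 0 < a 0))) := by
  simp only [grevlexLT, totDeg_eq_sum, Fin.sum_univ_four, Fin.exists_fin_succ, Fin.forall_fin_succ]
  simp
  omega

theorem grevlexLT_classRep {m : Fin 4 →₀ ℕ} (hm : ¬IsStandard m) : grevlexLT (classRep m) m := by
  unfold IsStandard at hm
  rw [grevlexLT_fin_four_iff]
  simp only [classRep]
  split_ifs <;> simp <;> omega

theorem normalForm_eq_or_grevlexLT (m : Fin 4 →₀ ℕ) :
    normalForm m = m ∨ grevlexLT (normalForm m) m := by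
  by_cases hm : IsStandard m
  · exact Or.inl (normalForm_of_isStandard hm)
  · exact Or.inr (normalForm_of_not_isStandard hm ▸ grevlexLT_classRep hm)

section Generators

variable (K : Type) [Field K]

def idealGens : Set (MvPolynomial (Fin 4) K) :=
  {X 0 * X 1 - X 2 * X 3, X 0 * X 2 - X 1 * X 3, X 1 * X 2 - X 0 * X 3}

def groebnerGens : Set (MvPolynomial (Fin 4) K) :=
  {X 1 * X 2 - X 0 * X 3, X 0 * X 2 - X 1 * X 3, X 0 * X 1 - X 2 * X 3,
    X 1 ^ 2 * X 3 - X 2 ^ 2 * X 3, X 0 ^ 2 * X 3 - X 2 ^ 2 * X 3, X 2 ^ 3 * X 3 - X 2 * X 3 ^ 3}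

theorem idealGens_subset_groebnerGens : idealGens K ⊆ groebnerGens K := by
  simp [idealGens, groebnerGens, Set.insert_subset_iff]

theorem groebnerGens_subset_span : groebnerGens K ⊆ Ideal.span (idealGens K) := by
  have g₁ : X 0 * X 1 - X 2 * X 3 ∈ Ideal.span (idealGens K) :=
    Ideal.subset_span (by simp [idealGens])
  have g₂ : X 0 * X 2 - X 1 * X 3 ∈ Ideal.span (idealGens K) :=
    Ideal.subset_span (by simp [idealGens])
  have g₃ : X 1 * X 2 - X 0 * X 3 ∈ Ideal.span (idealGens K) :=
    Ideal.subset_span (by simp [idealGens])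
  simp only [groebnerGens, Set.insert_subset_iff, Set.singleton_subset_iff, SetLike.mem_coe]
  refine ⟨g₃, g₂, g₁, ?_, ?_, ?_⟩
  · convert sub_mem (Ideal.mul_mem_left _ (X 2) g₁) (Ideal.mul_mem_left _ (X 1) g₂) using 1
    ring
  · convert sub_mem (Ideal.mul_mem_left _ (X 2) g₁) (Ideal.mul_mem_left _ (X 0) g₃) using 1
    ring
  · convert add_mem (add_mem (Ideal.mul_mem_left _ (X 3 ^ 2 - X 2 ^ 2) g₁)
      (Ideal.mul_mem_left _ (X 1 * X 2) g₂)) (Ideal.mul_mem_left _ (X 1 * X 3) g₃) using 1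
    ring

variable {K}

theorem mapExponents_normalForm_eq_zero {f : MvPolynomial (Fin 4) K}
    (hf : f ∈ Ideal.span (idealGens K)) : mapExponents normalForm f = 0 := by
  refine mapExponents_eq_zero_of_mem_span normalForm ?_ hf
  simp only [idealGens, Set.mem_insert_iff, Set.mem_singleton_iff, forall_eq_or_imp, forall_eq,
    X_mul_X_eq_monomial]
  exact ⟨mapExponents_mul_binomial fun m => (normalForm_add_eq_normalForm_add m).1,
    mapExponents_mul_binomial fun m => (normalForm_add_eq_normalForm_add m).2.1,
    mapExponents_mul_binomial fun m => (normalForm_add_eq_normalForm_add m).2.2⟩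

theorem exists_isLeadExp_le_of_not_isStandard {a : Fin 4 →₀ ℕ} (ha : ¬IsStandard a) :
    ∃ g ∈ groebnerGens K, g ≠ 0 ∧ ∃ b, IsLeadExp g b ∧ b ≤ a := by
  have key (u v : Fin 4 →₀ ℕ) (hG : monomial u 1 - monomial v 1 ∈ groebnerGens K)
      (hvu : grevlexLT v u) (hua : ∀ i, u i ≤ a i) :=
    exists_isLeadExp_le_of_binomial_mem hG hvu (Finsupp.le_def.2 hua)
  unfold IsStandard at ha
  rcases (by omega : (0 < a 1 ∧ 0 < a 2) ∨ (0 < a 0 ∧ 0 < a 2) ∨ (0 < a 0 ∧ 0 < a 1) ∨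
      (2 ≤ a 1 ∧ 0 < a 3) ∨ (2 ≤ a 0 ∧ 0 < a 3) ∨ (3 ≤ a 2 ∧ 0 < a 3)) with h | h | h | h | h | h
    <;> [refine key (single 1 1 + single 2 1) (single 0 1 + single 3 1) ?_ ?_ ?_;
      refine key (single 0 1 + single 2 1) (single 1 1 + single 3 1) ?_ ?_ ?_;
      refine key (single 0 1 + single 1 1) (single 2 1 + single 3 1) ?_ ?_ ?_;
      refine key (single 1 2 + single 3 1) (single 2 2 + single 3 1) ?_ ?_ ?_;
      refine key (single 0 2 + single 3 1) (single 2 2 + single 3 1) ?_ ?_ ?_;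
      refine key (single 2 3 + single 3 1) (single 2 1 + single 3 3) ?_ ?_ ?_]
    <;> (try intro i; fin_cases i)
    <;> simp [groebnerGens, ← X_pow_mul_X_pow_eq_monomial, grevlexLT_fin_four_iff]
    <;> omega

end Generators

/-- The set `{t_2t_3 - t_1t_4, t_1t_3 - t_2t_4, t_1t_2 - t_3t_4, t_2²t_4 - t_3²t_4,
t_1²t_4 - t_3²t_4, t_3³t_4 - t_3t_4³}` is a Gröbner basis, w.r.t. GRevLex, of the ideal
generated by `t_1t_2 - t_3t_4, t_1t_3 - t_2t_4, t_2t_3 - t_1t_4`. -/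
theorem stmt5 {K : Type} [Field K] :
    IsGroebnerBasis
      ({X 1 * X 2 - X 0 * X 3, X 0 * X 2 - X 1 * X 3, X 0 * X 1 - X 2 * X 3,
        X 1 ^ 2 * X 3 - X 2 ^ 2 * X 3, X 0 ^ 2 * X 3 - X 2 ^ 2 * X 3,
        X 2 ^ 3 * X 3 - X 2 * X 3 ^ 3} : Set (MvPolynomial (Fin 4) K))
      (Ideal.span {X 0 * X 1 - X 2 * X 3, X 0 * X 2 - X 1 * X 3, X 1 * X 2 - X 0 * X 3}) := by
  change IsGroebnerBasis (groebnerGens K) (Ideal.span (idealGens K))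
  refine ⟨groebnerGens_subset_span K, le_antisymm (Ideal.span_le.2 (groebnerGens_subset_span K))
    (Ideal.span_mono (idealGens_subset_groebnerGens K)), fun f hf _ a ha => ?_⟩
  by_cases hstd : IsStandard a
  · exact (not_isLeadExp_of_mapExponents_eq_zero normalForm_eq_or_grevlexLT
      (mapExponents_normalForm_eq_zero hf) ha (normalForm_of_isStandard hstd)).elim
  · exact exists_isLeadExp_le_of_not_isStandard hstd
end

section
/- Let K be a field of characteristic 2 and I = (t_1t_2 - t_3t_4, t_1t_3 - t_2t_4, t_2t_3 - t_1t_4) ⊆ K[t_1,t_2,t_3,t_4]. Then I is not a radical ideal; specifically h = t_1t_2 - t_1t_3 satisfies h² ∈ I but h ∉ I. -/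
open MvPolynomial DualNumber

/-- In characteristic 2, the ideal `I = (t_1t_2 - t_3t_4, t_1t_3 - t_2t_4, t_2t_3 - t_1t_4)`
is not radical: `h = t_1t_2 - t_1t_3` satisfies `h² ∈ I` but `h ∉ I`. -/
theorem stmt6 {K : Type} [Field K] [CharP K 2] :
    ¬ (Ideal.span {X 0 * X 1 - X 2 * X 3, X 0 * X 2 - X 1 * X 3, X 1 * X 2 - X 0 * X 3} :
        Ideal (MvPolynomial (Fin 4) K)).IsRadical ∧
    (X 0 * X 1 - X 0 * X 2 : MvPolynomial (Fin 4) K) ∉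
      (Ideal.span {X 0 * X 1 - X 2 * X 3, X 0 * X 2 - X 1 * X 3, X 1 * X 2 - X 0 * X 3}) ∧
    (X 0 * X 1 - X 0 * X 2 : MvPolynomial (Fin 4) K) ^ 2 ∈
      (Ideal.span {X 0 * X 1 - X 2 * X 3, X 0 * X 2 - X 1 * X 3, X 1 * X 2 - X 0 * X 3}) := by
  set I : Ideal (MvPolynomial (Fin 4) K) :=
    Ideal.span {X 0 * X 1 - X 2 * X 3, X 0 * X 2 - X 1 * X 3, X 1 * X 2 - X 0 * X 3} with hIdef
  have h2K : (2 : K) = 0 := by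
    have := CharP.cast_eq_zero K 2
    exact_mod_cast this
  have h2 : (2 : MvPolynomial (Fin 4) K) = 0 := by
    rw [show (2 : MvPolynomial (Fin 4) K) = C (2 : K) from (map_ofNat C 2).symm, h2K, map_zero]
  -- membership of h^2
  have hmem : (X 0 * X 1 - X 0 * X 2 : MvPolynomial (Fin 4) K) ^ 2 ∈ I := by
    have e : (X 0 * X 1 - X 0 * X 2 : MvPolynomial (Fin 4) K) ^ 2
        = (X 0 * X 1) * (X 0 * X 1 - X 2 * X 3) + (X 0 * X 2) * (X 0 * X 2 - X 1 * X 3) := by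
      linear_combination (X 0 * X 1 * X 2 * X 3 - X 0 ^ 2 * X 1 * X 2 :
        MvPolynomial (Fin 4) K) * h2
    rw [e]
    exact I.add_mem (Ideal.mul_mem_left _ _ (Ideal.subset_span (by simp)))
      (Ideal.mul_mem_left _ _ (Ideal.subset_span (by simp)))
  -- non-membership of h
  have hnot : (X 0 * X 1 - X 0 * X 2 : MvPolynomial (Fin 4) K) ∉ I := by
    intro hmem'
    have h2D : (2 : DualNumber K) = 0 := by
      have : (algebraMap K (DualNumber K)) 2 = 2 := map_ofNat _ 2
      rw [← this, h2K, map_zero]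
    have hee : (ε : DualNumber K) * ε = 0 := DualNumber.eps_mul_eps
    let φ : MvPolynomial (Fin 4) K →ₐ[K] DualNumber K :=
      aeval ![1, 1, 1 + (ε : DualNumber K), 1 + ε]
    have hker : I ≤ RingHom.ker φ.toRingHom := by
      rw [hIdef, Ideal.span_le]
      intro p hp
      simp only [Set.mem_insert_iff, Set.mem_singleton_iff] at hp
      rcases hp with rfl | rfl | rfl <;>
      · show φ _ = 0
        simp only [φ, map_sub, map_mul, aeval_X]
        simp only [Matrix.cons_val_zero, Matrix.cons_val_one, Matrix.head_cons,
          Matrix.cons_val_two, Matrix.tail_cons, Matrix.cons_val_three]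
        first
          | ring1
          | linear_combination (-(ε : DualNumber K)) * h2D - hee
    have hz := hker hmem'
    rw [RingHom.mem_ker] at hz
    simp only [AlgHom.toRingHom_eq_coe, RingHom.coe_coe, φ, map_sub, map_mul, aeval_X,
      Matrix.cons_val_zero, Matrix.cons_val_one, Matrix.head_cons,
      Matrix.cons_val_two, Matrix.tail_cons] at hz
    have hεz : (ε : DualNumber K) = 0 := by linear_combination -hz
    have : (ε : DualNumber K).snd = (0 : DualNumber K).snd := by rw [hεz]
    rw [DualNumber.snd_eps, TrivSqZeroExt.snd_zero] at this
    exact one_ne_zero this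
  refine ⟨fun hrad => hnot (hrad ⟨2, hmem⟩), hnot, hmem⟩
end

section
/- Let K = F_q with q ≠ 2, let C be a clutter on vertices y_1,...,y_n with edges having characteristic vectors v_1,...,v_s, and let X_C ⊆ P^{s-1} be the projective set parameterized by C. If the binomial t_it_j - t_kt_ℓ (with i,j,k,ℓ distinct) lies in I(X_C), then y^{v_i} y^{v_j} = y^{v_k} y^{v_ℓ}, equivalently v_i + v_j = v_k + v_ℓ. -/
open MvPolynomial

/-- Auxiliary: the binomial vanishes (affinely) at every admissible parameter point. -/
lemma vanish_at_param {K : Type} [Field K] {n s : ℕ} (v : Fin s → Fin n → ℕ)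
    (i j k l : Fin s)
    (hmem : (X i * X j - X k * X l : MvPolynomial (Fin s) K) ∈ vanishIdeal (paramSet v))
    (x : Fin n → K) (hx : monEval v x ≠ 0) :
    monEval v x i * monEval v x j = monEval v x k * monEval v x l := by
  set w := monEval v x with hw
  have hp : Projectivization.mk K w hx ∈ paramSet v := ⟨x, hx, rfl⟩
  have h0 : eval (Projectivization.mk K w hx).rep
      (X i * X j - X k * X l : MvPolynomial (Fin s) K) = 0 := by
    have hle : vanishIdeal (paramSet v) ≤
        RingHom.ker (MvPolynomial.eval (Projectivization.mk K w hx).rep) := by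
      apply Ideal.span_le.mpr
      intro f hf
      exact hf.2 _ hp
    exact hle hmem
  obtain ⟨a, ha⟩ := Projectivization.exists_smul_eq_mk_rep K w hx
  rw [← ha] at h0
  simp only [map_sub, map_mul, eval_X, Pi.smul_apply, Units.smul_def, smul_eq_mul] at h0
  have ha2 : ((a : K) * w i) * ((a : K) * w j) - ((a : K) * w k) * ((a : K) * w l)
      = (a : K) * (a : K) * (w i * w j - w k * w l) := by ring
  rw [ha2] at h0
  rcases mul_eq_zero.mp h0 with h | h
  · exact absurd h (by simp [a.ne_zero])
  · exact sub_eq_zero.mp h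

/-- Auxiliary: evaluating the monomials at the point which is `c` at vertex `m` and `1`
elsewhere gives `c ^ v t m`. -/
lemma monEval_single {K : Type} [Field K] {n s : ℕ} (v : Fin s → Fin n → ℕ)
    (m : Fin n) (c : K) (t : Fin s) :
    monEval v (fun r => if r = m then c else 1) t = c ^ v t m := by
  unfold monEval
  rw [Fintype.prod_eq_single m]
  · simp
  · intro r hr
    simp [hr]

/-- Let `C` be a clutter with edges having characteristic (0/1) vectors `v_1,…,v_s`, and
let `X_C` be the projective set parameterized by `C` over `F_q` with `q ≠ 2`.
If `t_it_j - t_kt_ℓ ∈ I(X_C)` with `i,j,k,ℓ` distinct, then `v_i + v_j = v_k + v_ℓ`. -/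
theorem stmt8 {K : Type} [Field K] [Fintype K] (hq : Fintype.card K ≠ 2)
    {n s : ℕ} (v : Fin s → Fin n → ℕ)
    (h01 : ∀ i m, v i m ≤ 1) (hcl : clutterType v)
    (i j k l : Fin s)
    (hdist : i ≠ j ∧ i ≠ k ∧ i ≠ l ∧ j ≠ k ∧ j ≠ l ∧ k ≠ l)
    (hmem : (X i * X j - X k * X l : MvPolynomial (Fin s) K) ∈ vanishIdeal (paramSet v)) :
    ∀ m, v i m + v j m = v k m + v l m := by
  classical
  intro m
  -- the key scalar identity at points `(c, 1, …, 1)`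
  have key : ∀ c : K, (monEval v (fun r => if r = m then c else 1) ≠ 0) →
      c ^ (v i m + v j m) = c ^ (v k m + v l m) := by
    intro c hc
    have := vanish_at_param v i j k l hmem _ hc
    simpa [monEval_single, pow_add] using this
  -- for nonzero c the point is admissible
  have keyne : ∀ c : K, c ≠ 0 → c ^ (v i m + v j m) = c ^ (v k m + v l m) := by
    intro c hc
    apply key
    intro h
    have := congrFun h i
    rw [monEval_single] at this
    exact pow_ne_zero _ hc this
  -- there exists c ≠ 0, c ≠ 1 since card K ≥ 3
  have hcard : 2 < Fintype.card K := by
    rcases lt_or_ge 2 (Fintype.card K) with h | h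
    · exact h
    · exact absurd (le_antisymm h Fintype.one_lt_card) hq
  obtain ⟨c, hc0, hc1⟩ : ∃ c : K, c ≠ 0 ∧ c ≠ 1 := by
    by_contra hcon
    push_neg at hcon
    have hsub : (Finset.univ : Finset K) ⊆ {0, 1} := by
      intro c _
      rcases eq_or_ne c 0 with h | h
      · simp [h]
      · simp [hcon c h]
    have := Finset.card_le_card hsub
    rw [Finset.card_univ] at this
    have h2 : ({0, 1} : Finset K).card ≤ 2 := Finset.card_insert_le _ _ |>.trans (by simp)
    omega
  -- notation
  set a := v i m + v j m with hadef
  set b := v k m + v l m with hbdef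
  have ha2 : a ≤ 2 := by have := h01 i m; have := h01 j m; omega
  have hb2 : b ≤ 2 := by have := h01 k m; have := h01 l m; omega
  by_contra hne
  -- first: a = 0 ↔ b = 0, using the point with c = 0
  have hzero : ∀ (p q r t : Fin s), v p m + v q m = 0 → 0 < v r m + v t m →
      monEval v (fun r' => if r' = m then (0:K) else 1) p *
        monEval v (fun r' => if r' = m then (0:K) else 1) q ≠
      monEval v (fun r' => if r' = m then (0:K) else 1) r *
        monEval v (fun r' => if r' = m then (0:K) else 1) t := by
    intro p q r t hpq hrt
    simp only [monEval_single]
    have hvp : v p m = 0 := by omega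
    have hvq : v q m = 0 := by omega
    have hrt' : v r m ≠ 0 ∨ v t m ≠ 0 := by omega
    rcases hrt' with h | h <;>
      simp [hvp, hvq, zero_pow h]
  have hzmem : ∀ (p : Fin s), v p m = 0 →
      monEval v (fun r' => if r' = m then (0:K) else 1) ≠ 0 := by
    intro p hp h
    have := congrFun h p
    rw [monEval_single, hp] at this
    simp at this
  rcases Nat.eq_zero_or_pos a with haz | hapos
  · -- a = 0, so b > 0 : contradiction at c = 0
    have hbpos : 0 < b := by omega
    have hadm := hzmem i (by omega)
    have := vanish_at_param v i j k l hmem _ hadm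
    exact hzero i j k l haz hbpos this
  · rcases Nat.eq_zero_or_pos b with hbz | hbpos
    · have hadm := hzmem k (by omega)
      have := vanish_at_param v i j k l hmem _ hadm
      exact hzero k l i j hbz hapos this.symm
    · -- both a, b ∈ {1, 2}, a ≠ b: so {a,b} = {1,2}; then c = c^2 for all c ≠ 0
      have hc2 : c = c ^ 2 := by
        rcases (by omega : (a = 1 ∧ b = 2) ∨ (a = 2 ∧ b = 1)) with ⟨h1, h2⟩ | ⟨h1, h2⟩
        · have := keyne c hc0
          rw [h1, h2] at this
          simpa using this
        · have := keyne c hc0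
          rw [h1, h2] at this
          simpa using this.symm
      have hcc : c * c = c * 1 := by
        rw [mul_one]
        calc c * c = c ^ 2 := (sq c).symm
        _ = c := hc2.symm
      exact hc1 (mul_left_cancel₀ hc0 hcc)
end

section
/- Let K = F_q with q ≠ 2. Then the ideal I = (t_1t_2 - t_3t_4, t_1t_3 - t_2t_4, t_2t_3 - t_1t_4) ⊆ K[t_1,...,t_4] is not the vanishing ideal of any projective set in P^3 parameterized by a clutter. -/
open MvPolynomial

lemma keyRel {K : Type} [Field K] {n : ℕ} (v : Fin 4 → Fin n → ℕ)
    (i j k l : Fin 4)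
    (hmem : (X i * X j - X k * X l : MvPolynomial (Fin 4) K) ∈
      vanishIdeal (paramSet (K := K) v))
    (x : Fin n → K) (h : monEval v x ≠ 0) :
    monEval v x i * monEval v x j = monEval v x k * monEval v x l := by
  have hp : Projectivization.mk K (monEval v x) h ∈ paramSet (K := K) v := ⟨x, h, rfl⟩
  set w := monEval v x with hw
  set p := Projectivization.mk K w h with hpdef
  have h0 : eval p.rep (X i * X j - X k * X l : MvPolynomial (Fin 4) K) = 0 := by
    have hle : vanishIdeal (paramSet (K := K) v) ≤ RingHom.ker (eval p.rep) := by
      rw [vanishIdeal]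
      refine Ideal.span_le.mpr ?_
      intro g hg
      exact RingHom.mem_ker.mpr (hg.2 p hp)
    exact hle hmem
  obtain ⟨c, hc⟩ := Projectivization.exists_smul_eq_mk_rep K w h
  rw [← hc] at h0
  simp only [map_sub, map_mul, eval_X, Pi.smul_apply, Units.smul_def, smul_eq_mul,
    sub_eq_zero] at h0
  have hcne : (c : K) ≠ 0 := c.ne_zero
  apply mul_left_cancel₀ (mul_ne_zero hcne hcne)
  linear_combination h0

lemma keyNum {K : Type} [Field K] [Fintype K] (hq : Fintype.card K ≠ 2) (a b c d : ℕ)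
    (ha : a ≤ 1) (hb : b ≤ 1) (hc : c ≤ 1) (hd : d ≤ 1)
    (H1 : ∀ t : K, t ≠ 0 → t ^ (a + b) = t ^ (c + d))
    (H0 : ¬(a = 1 ∧ b = 1 ∧ c = 1 ∧ d = 1) → (0 : K) ^ (a + b) = (0 : K) ^ (c + d)) :
    a + b = c + d := by
  have hcard : 3 ≤ Fintype.card K := by
    have h2 : 1 < Fintype.card K := Fintype.one_lt_card
    omega
  obtain ⟨t, ht0, ht1⟩ : ∃ t : K, t ≠ 0 ∧ t ≠ 1 := by
    classical
    by_contra hcon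
    push_neg at hcon
    have hsub : (Finset.univ : Finset K) ⊆ {0, 1} := by
      intro x _
      by_cases hx : x = 0
      · simp [hx]
      · simp [hcon x hx]
    have h1 := Finset.card_le_card hsub
    have h2 : ({0, 1} : Finset K).card ≤ 2 := by
      refine le_trans (Finset.card_insert_le _ _) ?_
      simp
    rw [Finset.card_univ] at h1
    omega
  interval_cases a <;> interval_cases b <;> interval_cases c <;> interval_cases d <;>
    first
    | rfl
    | (have h0 := H0 (by norm_num); norm_num at h0; done)
    | (have h1 := H1 t ht0
       have h2 : t = 1 := by first | linear_combination h1 | linear_combination - h1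
       exact absurd h2 ht1)
    | (have h1 := H1 t ht0
       have h2 : t * t = t * 1 := by
         first | linear_combination h1 | linear_combination - h1
       exact absurd (mul_left_cancel₀ ht0 h2) ht1)

/-- For `q ≠ 2`, the ideal `(t_1t_2 - t_3t_4, t_1t_3 - t_2t_4, t_2t_3 - t_1t_4)` is not the
vanishing ideal of any set in `ℙ³` parameterized by a clutter (i.e. by squarefree monomials
with pairwise incomparable supports). -/
theorem stmt9 {K : Type} [Field K] [Fintype K] (hq : Fintype.card K ≠ 2) :
    ¬ ∃ (n : ℕ) (v : Fin 4 → Fin n → ℕ),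
        (∀ i m, v i m ≤ 1) ∧ clutterType v ∧
        vanishIdeal (paramSet (K := K) v) =
          Ideal.span {X 0 * X 1 - X 2 * X 3, X 0 * X 2 - X 1 * X 3, X 1 * X 2 - X 0 * X 3} := by
  rintro ⟨n, v, hdeg, hclut, hI⟩
  -- the three generators belong to the vanishing ideal
  have hg : ∀ (i j k l : Fin 4),
      (X i * X j - X k * X l : MvPolynomial (Fin 4) K) ∈
        ({X 0 * X 1 - X 2 * X 3, X 0 * X 2 - X 1 * X 3, X 1 * X 2 - X 0 * X 3} :
          Set (MvPolynomial (Fin 4) K)) →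
      (X i * X j - X k * X l : MvPolynomial (Fin 4) K) ∈
        vanishIdeal (paramSet (K := K) v) := by
    intro i j k l hmem
    rw [hI]
    exact Ideal.subset_span hmem
  -- the main coordinatewise claim
  have main : ∀ m : Fin n, v 0 m = v 1 m ∧ v 0 m = v 2 m ∧ v 0 m = v 3 m := by
    intro m
    set xfun : K → Fin n → K := fun t j => if j = m then t else 1 with hxfun
    have hmon : ∀ (t : K) (i : Fin 4), monEval v (xfun t) i = t ^ v i m := by
      intro t i
      simp only [monEval, hxfun]
      rw [Fintype.prod_eq_single m]
      · simp
      · intro j hj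
        simp [hj]
    have hnz : ∀ t : K, t ≠ 0 → monEval v (xfun t) ≠ 0 := by
      intro t ht hz
      have h0 := congrFun hz 0
      rw [hmon t 0] at h0
      exact pow_ne_zero _ ht h0
    have hnz0 : ¬(v 0 m = 1 ∧ v 1 m = 1 ∧ v 2 m = 1 ∧ v 3 m = 1) →
        monEval v (xfun 0) ≠ 0 := by
      intro hnot hz
      have hex : ∃ i : Fin 4, v i m = 0 := by
        by_contra hcon
        push_neg at hcon
        have h0 := hdeg 0 m; have h1 := hdeg 1 m; have h2 := hdeg 2 m; have h3 := hdeg 3 m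
        have c0 := hcon 0; have c1 := hcon 1; have c2 := hcon 2; have c3 := hcon 3
        exact hnot ⟨by omega, by omega, by omega, by omega⟩
      obtain ⟨i, hi⟩ := hex
      have h0 := congrFun hz i
      rw [hmon 0 i, hi, pow_zero] at h0
      exact one_ne_zero h0
    have rel : ∀ (i j k l : Fin 4),
        (X i * X j - X k * X l : MvPolynomial (Fin 4) K) ∈
          vanishIdeal (paramSet (K := K) v) →
        ∀ t : K, monEval v (xfun t) ≠ 0 →
        t ^ (v i m + v j m) = t ^ (v k m + v l m) := by
      intro i j k l hmem t ht
      have h := keyRel v i j k l hmem (xfun t) ht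
      rw [hmon, hmon, hmon, hmon, ← pow_add, ← pow_add] at h
      exact h
    have hm1 := hg 0 1 2 3 (by simp)
    have hm2 := hg 0 2 1 3 (by simp)
    have hm3 := hg 1 2 0 3 (by simp)
    have e1 : v 0 m + v 1 m = v 2 m + v 3 m :=
      keyNum hq _ _ _ _ (hdeg 0 m) (hdeg 1 m) (hdeg 2 m) (hdeg 3 m)
        (fun t ht => rel 0 1 2 3 hm1 t (hnz t ht))
        (fun hnot => rel 0 1 2 3 hm1 0 (hnz0 hnot))
    have e2 : v 0 m + v 2 m = v 1 m + v 3 m :=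
      keyNum hq _ _ _ _ (hdeg 0 m) (hdeg 2 m) (hdeg 1 m) (hdeg 3 m)
        (fun t ht => rel 0 2 1 3 hm2 t (hnz t ht))
        (fun hnot => rel 0 2 1 3 hm2 0 (hnz0 (by tauto)))
    have e3 : v 1 m + v 2 m = v 0 m + v 3 m :=
      keyNum hq _ _ _ _ (hdeg 1 m) (hdeg 2 m) (hdeg 0 m) (hdeg 3 m)
        (fun t ht => rel 1 2 0 3 hm3 t (hnz t ht))
        (fun hnot => rel 1 2 0 3 hm3 0 (hnz0 (by tauto)))
    exact ⟨by omega, by omega, by omega⟩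
  -- conclude: v 0 = v 1, contradicting the clutter condition
  refine hclut 0 1 (by decide) ?_
  intro k hk
  have := (main k).1
  simp only [Set.mem_setOf_eq] at hk ⊢
  omega
end

section
/- Let K = F_q and let Y ⊆ P^1 be a set containing [e_1] and [e_2] such that Y ∪ {[0]} is a monoid under componentwise multiplication. Then there exists a positive integer r dividing q-1 such that I(Y) = (t_1^{r+1}t_2 - t_1t_2^{r+1}); moreover r = |Y ∩ T| where T is the projective torus in P^1. -/
open MvPolynomial

/-!
Every point of `ℙ¹` is either `∞ = [1 : 0]` or `[a : 1]`. The monoid hypothesis makes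
`H = {a ∈ Kˣ | [a : 1] ∈ Y}` a submonoid, hence a subgroup, of the finite group `Kˣ`; with
`r = |H|` we get `r ∣ q - 1` and `Y = {∞, [0 : 1]} ∪ {[a : 1] | a ∈ H}`, so `r = |Y ∩ T|`.

A homogeneous `g` of degree `d` vanishing on `Y` dehomogenizes (`t₂ = 1`) to a polynomial `p` with
roots `0` and `H`, so `p` is divisible by `t (t^r - 1) = t^(r+1) - t`; vanishing at `∞` means
`deg p < d`, which supplies an extra factor `t₂` on homogenizing back. Hence `g` is a multiple of
`t₂ · (t₁^(r+1) - t₁ t₂^r)`.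
-/

open scoped LinearAlgebra.Projectivization Polynomial

theorem MvPolynomial.IsHomogeneous.eval_smul_s15 {σ R : Type*} [CommRing R] [Fintype σ]
    {g : MvPolynomial σ R} {d : ℕ} (hg : g.IsHomogeneous d) (c : R) (x : σ → R) :
    eval (c • x) g = c ^ d * eval x g := by
  rw [eval_eq', eval_eq', Finset.mul_sum]
  refine Finset.sum_congr rfl fun m hm => ?_
  have hdeg : ∑ i, m i = d := by
    rw [← hg (mem_support_iff.mp hm), Finsupp.weight_apply, Finsupp.sum_fintype _ _ (by simp)]
    simp
  simp only [Pi.smul_apply, smul_eq_mul, mul_pow, Finset.prod_mul_distrib,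
    Finset.prod_pow_eq_pow_sum, hdeg]
  ring

namespace Projectivization

variable {K ι : Type*} [Field K]

theorem mk_rep_apply_ne_zero_iff {v : ι → K} (hv : v ≠ 0) (i : ι) :
    (mk K v hv).rep i ≠ 0 ↔ v i ≠ 0 := by
  obtain ⟨c, hc⟩ := exists_smul_eq_mk_rep K v hv
  simp [← hc, Units.smul_def]

theorem mk_rep_mul_rep {v w : ι → K} (hv : v ≠ 0) (hw : w ≠ 0) (hvw : v * w ≠ 0) :
    ∃ h : (fun i => (mk K v hv).rep i * (mk K w hw).rep i) ≠ 0,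
      mk K (fun i => (mk K v hv).rep i * (mk K w hw).rep i) h = mk K (v * w) hvw := by
  obtain ⟨a, ha⟩ := exists_smul_eq_mk_rep K v hv
  obtain ⟨b, hb⟩ := exists_smul_eq_mk_rep K w hw
  have hprod : (fun i => (mk K v hv).rep i * (mk K w hw).rep i) = (a * b) • (v * w) := by
    ext i
    simp only [← ha, ← hb, Pi.smul_apply, Units.smul_def, Units.val_mul, Pi.mul_apply, smul_eq_mul]
    ring
  refine ⟨by rw [hprod, Ne, smul_eq_zero_iff_eq]; exact hvw, ?_⟩
  rw [mk_eq_mk_iff]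
  exact ⟨a * b, hprod.symm⟩

theorem eval_mk_rep_eq_zero_iff [Fintype ι] {v : ι → K} (hv : v ≠ 0)
    {g : MvPolynomial ι K} {d : ℕ} (hg : g.IsHomogeneous d) :
    eval (mk K v hv).rep g = 0 ↔ eval v g = 0 := by
  obtain ⟨c, hc⟩ := exists_smul_eq_mk_rep K v hv
  rw [← hc, Units.smul_def, hg.eval_smul_s15]
  simp

end Projectivization

theorem Polynomial.prod_X_sub_C_dvd_of_isRoot {R : Type*} [CommRing R] [IsDomain R]
    (s : Finset R) {p : R[X]} (h : ∀ a ∈ s, p.IsRoot a) :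
    ∏ a ∈ s, (Polynomial.X - Polynomial.C a) ∣ p := by
  rcases eq_or_ne p 0 with rfl | hp
  · exact dvd_zero _
  rw [Finset.prod_eq_multiset_prod, Multiset.prod_X_sub_C_dvd_iff_le_roots hp,
    Multiset.le_iff_subset s.nodup]
  exact fun a ha => (Polynomial.mem_roots hp).mpr (h a ha)

namespace MvPolynomial

variable {K : Type*} [Field K]

/-- Inverse to `Polynomial.homogenize · d` on polynomials homogeneous of degree `d`. -/
noncomputable def dehomogenize (g : MvPolynomial (Fin 2) K) : K[X] :=
  aeval ![Polynomial.X, 1] g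

theorem natDegree_dehomogenize_le {g : MvPolynomial (Fin 2) K} {d : ℕ}
    (hg : g.IsHomogeneous d) : (dehomogenize g).natDegree ≤ d := by
  rw [dehomogenize, g.as_sum, map_sum]
  refine Polynomial.natDegree_sum_le_of_forall_le _ _ fun m hm => ?_
  have hdeg : m.degree = d := by
    rw [Finsupp.degree_eq_weight_one]
    exact hg (mem_support_iff.mp hm)
  simp only [aeval_monomial, Finsupp.prod_fintype _ _ (fun _ => pow_zero _), Fin.prod_univ_two,
    Matrix.cons_val_zero, Matrix.cons_val_one, one_pow, mul_one, Polynomial.algebraMap_eq]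
  exact (Polynomial.natDegree_C_mul_X_pow_le _ _).trans (hdeg ▸ Finsupp.le_degree 0 m)

theorem eval_dehomogenize (g : MvPolynomial (Fin 2) K) (a : K) :
    (dehomogenize g).eval a = eval ![a, 1] g := by
  induction g using MvPolynomial.induction_on with
  | C c => simp [dehomogenize]
  | add p q hp hq => simp_all [dehomogenize]
  | mul_X p i ih => fin_cases i <;> simp_all [dehomogenize]

theorem eval_one_zero_homogenize (p : K[X]) (n : ℕ) :
    eval ![1, 0] (p.homogenize n) = p.coeff n := by
  induction p using Polynomial.induction_on' with
  | add p q hp hq => simp [hp, hq]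
  | monomial k c =>
    rcases le_or_gt k n with hkn | hnk
    · rw [Polynomial.homogenize_monomial hkn]
      rcases hkn.lt_or_eq with hkn | rfl
      · simp [eval_monomial, Polynomial.coeff_monomial, hkn.ne, Nat.sub_ne_zero_of_lt hkn]
      · simp [eval_monomial]
    · rw [Polynomial.homogenize_monomial_of_lt hnk]
      simp [Polynomial.coeff_monomial, hnk.ne']

/-- With `p = dehomogenize g` we have `g = homogenize p (deg p) * X 1 ^ (d - deg p)`; vanishing at
`[1 : 0]` kills the coefficient of `t ^ d` in `p`, so the exponent of `X 1` is positive. -/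
theorem homogenize_mul_X_one_dvd {g : MvPolynomial (Fin 2) K} {d : ℕ} (hg : g.IsHomogeneous d)
    (hinfty : eval ![1, 0] g = 0) {u : K[X]} (hu : u ∣ dehomogenize g) :
    u.homogenize u.natDegree * X 1 ∣ g := by
  have hdeg := natDegree_dehomogenize_le hg
  have hg' : (dehomogenize g).homogenize d = g := Polynomial.homogenize_eq_of_isHomogeneous hg rfl
  generalize dehomogenize g = p at hu hdeg hg'
  subst hg'
  rcases eq_or_ne p 0 with rfl | hp
  · simp
  have hlt : p.natDegree < d := hdeg.lt_of_ne fun hd => hp <| by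
    rw [← Polynomial.leadingCoeff_eq_zero, Polynomial.leadingCoeff, hd,
      ← eval_one_zero_homogenize, hinfty]
  have hsplit : p.homogenize d = p.homogenize p.natDegree * X 1 ^ (d - p.natDegree) := by
    rw [← Polynomial.homogenize_one, ← Polynomial.homogenize_mul _ _ le_rfl (by simp), mul_one,
      Nat.add_sub_cancel' hlt.le]
  rw [hsplit]
  exact mul_dvd_mul (Polynomial.homogenize_dvd hu) (dvd_pow_self _ (by omega))

end MvPolynomial

theorem Subgroup.mem_closure_submonoid_of_finite {G : Type*} [Group G] [Finite G]
    (M : Submonoid G) {a : G} : a ∈ Subgroup.closure (M : Set G) ↔ a ∈ M := by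
  rw [← Subgroup.mem_toSubmonoid, Subgroup.closure_toSubmonoid_of_finite, Submonoid.closure_eq]

namespace ProjectiveLine

variable {K : Type} [Field K]

def infty : ℙ K (Fin 2 → K) :=
  Projectivization.mk K ![1, 0] fun h => by simpa using congrFun h 0

def ofAffine (a : K) : ℙ K (Fin 2 → K) :=
  Projectivization.mk K ![a, 1] fun h => by simpa using congrFun h 1

theorem ofAffine_injective : Function.Injective (ofAffine (K := K)) := by
  intro a b hab
  obtain ⟨c, hc⟩ := (Projectivization.mk_eq_mk_iff' K _ _ _ _).mp hab
  have hc1 : c = 1 := by simpa using congrFun hc 1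
  simpa [hc1] using (congrFun hc 0).symm

theorem ofAffine_ne_infty (a : K) : ofAffine a ≠ infty := by
  intro h
  obtain ⟨c, hc⟩ := (Projectivization.mk_eq_mk_iff' K _ _ _ _).mp h
  simpa using congrFun hc 1

theorem eq_infty_or_exists_eq_ofAffine (p : ℙ K (Fin 2 → K)) :
    p = infty ∨ ∃ a, p = ofAffine a := by
  induction p with | h v hv => ?_
  by_cases h1 : v 1 = 0
  · left
    have h0 : v 0 ≠ 0 := fun h0 => hv (by ext i; fin_cases i <;> simp [h0, h1])
    refine (Projectivization.mk_eq_mk_iff' K _ _ _ _).mpr ⟨v 0, ?_⟩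
    ext i; fin_cases i <;> simp [h1]
  · right
    refine ⟨v 0 / v 1, (Projectivization.mk_eq_mk_iff' K _ _ _ _).mpr ⟨v 1, ?_⟩⟩
    ext i; fin_cases i <;> simp [mul_div_cancel₀ _ h1]

theorem eq_insert_infty_image_ofAffine {Y : Set (ℙ K (Fin 2 → K))} (hY : infty ∈ Y) :
    Y = insert infty (ofAffine '' {a | ofAffine a ∈ Y}) := by
  ext p
  rcases eq_infty_or_exists_eq_ofAffine p with rfl | ⟨a, rfl⟩
  · simp [hY]
  · simp [ofAffine_ne_infty, ofAffine_injective.eq_iff]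

theorem forall_rep_ofAffine_ne_zero_iff (a : K) : (∀ i, (ofAffine a).rep i ≠ 0) ↔ a ≠ 0 := by
  simp [ofAffine, Projectivization.mk_rep_apply_ne_zero_iff, Fin.forall_fin_two]

theorem not_forall_rep_infty_ne_zero : ¬ ∀ i, (infty : ℙ K (Fin 2 → K)).rep i ≠ 0 := by
  simp [infty, Projectivization.mk_rep_apply_ne_zero_iff]

theorem inter_torus_eq_image (Y : Set (ℙ K (Fin 2 → K))) :
    Y ∩ {p | ∀ i, p.rep i ≠ 0} =
      (fun a : Kˣ => ofAffine (a : K)) '' {a | ofAffine (a : K) ∈ Y} := by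
  ext p
  constructor
  · rintro ⟨hpY, hpT⟩
    rcases eq_infty_or_exists_eq_ofAffine p with rfl | ⟨a, rfl⟩
    · exact absurd hpT not_forall_rep_infty_ne_zero
    · exact ⟨Units.mk0 a ((forall_rep_ofAffine_ne_zero_iff a).mp hpT), hpY, rfl⟩
  · rintro ⟨a, ha, rfl⟩
    exact ⟨ha, (forall_rep_ofAffine_ne_zero_iff _).mpr a.ne_zero⟩

theorem vanishIdeal_insert_infty_image_ofAffine (s : Finset K) :
    vanishIdeal (insert infty (ofAffine '' s)) =
      Ideal.span {(∏ a ∈ s, (Polynomial.X - Polynomial.C a)).homogenize s.card * X 1} := by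
  set u := ∏ a ∈ s, (Polynomial.X - Polynomial.C a)
  have hu : u.natDegree = s.card := Polynomial.natDegree_finsetProd_X_sub_C_eq_card s id
  apply le_antisymm
  · rw [vanishIdeal, Ideal.span_le]
    rintro g ⟨⟨d, hg⟩, hvan⟩
    rw [SetLike.mem_coe, Ideal.mem_span_singleton, ← hu]
    refine homogenize_mul_X_one_dvd hg ?_ (Polynomial.prod_X_sub_C_dvd_of_isRoot s fun a ha => ?_)
    · exact (Projectivization.eval_mk_rep_eq_zero_iff _ hg).mp (hvan _ (Set.mem_insert _ _))
    · rw [Polynomial.IsRoot, eval_dehomogenize]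
      exact (Projectivization.eval_mk_rep_eq_zero_iff _ hg).mp
        (hvan _ (Set.mem_insert_of_mem _ ⟨a, ha, rfl⟩))
  · have hhom : (u.homogenize s.card * X 1).IsHomogeneous (s.card + 1) :=
      (Polynomial.isHomogeneous_homogenize u).mul (isHomogeneous_X K 1)
    rw [Ideal.span_le, Set.singleton_subset_iff]
    refine Ideal.subset_span ⟨⟨_, hhom⟩, ?_⟩
    rintro p (rfl | ⟨a, ha, rfl⟩)
    · refine (Projectivization.eval_mk_rep_eq_zero_iff _ hhom).mpr ?_
      simp
    · refine (Projectivization.eval_mk_rep_eq_zero_iff _ hhom).mpr ?_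
      rw [map_mul, Polynomial.eval_homogenize hu.le _ (by simp)]
      simp [u, Polynomial.eval_prod, Finset.prod_eq_zero ha]

theorem vanishIdeal_insert_infty_image_ofAffine_subgroup (H : Subgroup Kˣ) [Fintype H] :
    vanishIdeal (insert infty (ofAffine '' insert (0 : K) (Units.val '' (H : Set Kˣ)))) =
      Ideal.span {X 0 ^ (Fintype.card H + 1) * X 1 - X 0 * X 1 ^ (Fintype.card H + 1)} := by
  classical
  set s : Finset K := insert 0 ((H : Set Kˣ).toFinset.image (↑))
  have hs0 : (0 : K) ∉ (H : Set Kˣ).toFinset.image (↑) := by simp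
  have hcard : s.card = Fintype.card H + 1 := by
    simp [s, hs0, Finset.card_image_of_injective _ Units.val_injective]
  have hprod : ∏ a ∈ s, (Polynomial.X - Polynomial.C a) =
      Polynomial.X ^ (Fintype.card H + 1) - Polynomial.X := by
    rw [Finset.prod_insert hs0, Finset.prod_image Units.val_injective.injOn, ← Lagrange.nodal_eq,
      Lagrange.nodal_subgroup_eq_X_pow_card_sub_one, map_zero, sub_zero]
    ring
  have hs : (s : Set K) = insert 0 (Units.val '' H) := by simp [s]
  rw [← hs, vanishIdeal_insert_infty_image_ofAffine, hprod, hcard, Polynomial.homogenize_sub,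
    Polynomial.homogenize_X_pow le_rfl, Polynomial.homogenize_X (by omega)]
  simp only [Nat.sub_self, Nat.add_sub_cancel, pow_zero, mul_one, sub_mul, mul_assoc, ← pow_succ]

/-- `Y ∪ {[0]}` is closed under coordinatewise products, a zero product being the point `[0]`. -/
def MulClosed (Y : Set (ℙ K (Fin 2 → K))) : Prop :=
  ∀ p ∈ Y, ∀ p' ∈ Y, ∀ h : (fun i => p.rep i * p'.rep i) ≠ 0,
    Projectivization.mk K (fun i => p.rep i * p'.rep i) h ∈ Y

theorem MulClosed.ofAffine_mul_mem {Y : Set (ℙ K (Fin 2 → K))} (hY : MulClosed Y) {a b : K}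
    (ha : ofAffine a ∈ Y) (hb : ofAffine b ∈ Y) : ofAffine (a * b) ∈ Y := by
  have hab : ![a, 1] * ![b, 1] = ![a * b, 1] := by
    ext i; fin_cases i <;> simp
  obtain ⟨h, heq⟩ := Projectivization.mk_rep_mul_rep (K := K) (v := ![a, 1]) (w := ![b, 1]) _ _
    (hab ▸ fun h => by simpa using congrFun h 1)
  have := hY (Projectivization.mk K ![a, 1] _) ha (Projectivization.mk K ![b, 1] _) hb h
  rw [heq] at this
  convert this using 2
  simp only [ofAffine, hab]

def unitsSubmonoid (Y : Set (ℙ K (Fin 2 → K))) (hone : ofAffine 1 ∈ Y) (hmul : MulClosed Y) :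
    Submonoid Kˣ where
  carrier := {a | ofAffine (a : K) ∈ Y}
  one_mem' := hone
  mul_mem' ha hb := hmul.ofAffine_mul_mem ha hb

end ProjectiveLine

open ProjectiveLine

/-- If `[e_1], [e_2] ∈ Y ⊆ ℙ¹` and `Y ∪ {[0]}` is a monoid under componentwise
multiplication (it contains the identity `[(1,1)]` and is closed under componentwise
products, a zero product giving the adjoined element `[0]`), then there is a positive
integer `r` dividing `q-1` with `I(Y) = (t_1^{r+1}t_2 - t_1t_2^{r+1})`; moreover
`r = |Y ∩ T|` where `T` is the projective torus in `ℙ¹`. -/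
theorem stmt15 {K : Type} [Field K] [Fintype K] (Y : Set (Projectivization K (Fin 2 → K)))
    (he1 : Projectivization.mk K ![1, 0] (fun h => by simpa using congrFun h 0) ∈ Y)
    (he2 : Projectivization.mk K ![0, 1] (fun h => by simpa using congrFun h 1) ∈ Y)
    (hone : Projectivization.mk K ![1, 1] (fun h => by simpa using congrFun h 0) ∈ Y)
    (hmul : ∀ p ∈ Y, ∀ p' ∈ Y, ∀ h : (fun i => p.rep i * p'.rep i) ≠ 0,
      Projectivization.mk K (fun i => p.rep i * p'.rep i) h ∈ Y) :
    ∃ r : ℕ, 0 < r ∧ r ∣ Fintype.card K - 1 ∧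
      vanishIdeal Y = Ideal.span {X 0 ^ (r + 1) * X 1 - X 0 * X 1 ^ (r + 1)} ∧
      r = (Y ∩ {p | ∀ i, p.rep i ≠ 0}).ncard := by
  classical
  set H := Subgroup.closure (unitsSubmonoid Y hone hmul : Set Kˣ)
  have hH : (H : Set Kˣ) = {a : Kˣ | ofAffine (a : K) ∈ Y} :=
    Set.ext fun a => Subgroup.mem_closure_submonoid_of_finite _
  have hY : Y = insert infty (ofAffine '' insert (0 : K) (Units.val '' (H : Set Kˣ))) := by
    refine (eq_insert_infty_image_ofAffine he1).trans
      (congrArg (fun S => insert infty (ofAffine '' S)) (Set.ext fun a => ?_))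
    rcases eq_or_ne a 0 with rfl | ha
    · exact iff_of_true he2 (Set.mem_insert _ _)
    · rw [Set.mem_ofPred_eq, Set.mem_insert_iff, or_iff_right ha, hH]
      exact ⟨fun h => ⟨Units.mk0 a ha, h, rfl⟩, by rintro ⟨u, hu, rfl⟩; exact hu⟩
  refine ⟨Fintype.card H, Fintype.card_pos, ?_,
    hY ▸ vanishIdeal_insert_infty_image_ofAffine_subgroup H, ?_⟩
  · simpa [← Fintype.card_units, Nat.card_eq_fintype_card] using H.card_subgroup_dvd_card
  · have hinj : Function.Injective fun a : Kˣ => ofAffine (a : K) :=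
      ofAffine_injective.comp Units.val_injective
    rw [inter_torus_eq_image, ← hH, Set.ncard_image_of_injective _ hinj, ← Nat.card_coe_set_eq,
      SetLike.coe_sort_coe, Nat.card_eq_fintype_card]
end
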